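/- Let B be an integral domain containing ℚ, D : B → B a locally nilpotent derivation with kernel A, and s ∈ B such that D(s) is a unit of B. Then B = A[s] and B is a polynomial ring in the single variable s over A. -/

import Mathlib

def IsLND {B : Type*} [CommRing B] (D : B → B) : Prop :=
  (∀ a b : B, D (a + b) = D a + D b) ∧
  (∀ a b : B, D (a * b) = a * D b + D a * b) ∧
  (∀ x : B, ∃ n : ℕ, D^[n] x = 0)

/-!
A locally nilpotent derivation `D` of a domain of characteristic zero kills units: if `u * v = 1`
and `D^[p] u`, `D^[q] v` are the last nonzero iterates, the Leibniz rule gives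
`D^[p + q] 1 = (p + q).choose p • (D^[p] u * D^[q] v) ≠ 0`, forcing `p = 0`. So `D s` is a unit
of `A`. Differentiating `P(s) = 0` gives `P'(s) * D s = 0`, hence `s` is transcendental over `A` by
induction on the degree. If `D^[n + 1] b = 0`, then by induction `D b = Q(s)`, and an antiderivative
`P` of `(D s)⁻¹ Q` (which exists as `ℚ ⊆ A`) has `D (b - P(s)) = 0`, so `b ∈ A[s]`.
-/

open Polynomial Finset

theorem Polynomial.derivative_surjective {R : Type*} [Semiring R] [Algebra ℚ R] :
    Function.Surjective (derivative : R[X] → R[X]) := by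
  intro q
  induction q using Polynomial.induction_on' with
  | add q₁ q₂ h₁ h₂ =>
    obtain ⟨p₁, rfl⟩ := h₁
    obtain ⟨p₂, rfl⟩ := h₂
    exact ⟨p₁ + p₂, derivative_add⟩
  | monomial n a =>
    refine ⟨monomial (n + 1) (algebraMap ℚ R (n + 1)⁻¹ * a), ?_⟩
    rw [derivative_monomial, Nat.add_sub_cancel, mul_assoc, ← Nat.cast_comm, ← mul_assoc,
      ← map_natCast (algebraMap ℚ R), ← map_mul, Nat.cast_succ, inv_mul_cancel₀ (by positivity),
      map_one, one_mul]

namespace Derivation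

section LocallyNilpotent

variable {R B : Type*} [CommSemiring R] [CommRing B] [Algebra R B] (d : Derivation R B B)

def IsLocallyNilpotent : Prop := ∀ x, ∃ n, d^[n] x = 0

theorem iterate_map_mul (n : ℕ) (a b : B) :
    d^[n] (a * b) = ∑ ij ∈ antidiagonal n, n.choose ij.1 • (d^[ij.1] a * d^[ij.2] b) := by
  induction n with
  | zero => simp
  | succ n ih =>
    rw [sum_antidiagonal_choose_succ_nsmul (M := B) (fun i j ↦ d^[i] a * d^[j] b) n]
    simp only [Function.iterate_succ_apply', ih, map_sum, map_nsmul, leibniz, smul_eq_mul,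
      smul_add, sum_add_distrib]
    refine congrArg₂ (· + ·) rfl (sum_congr rfl fun ⟨i, j⟩ hij ↦ ?_)
    rw [n.choose_symm_of_eq_add (mem_antidiagonal.1 hij).symm, mul_comm]

theorem iterate_eq_zero_of_le {x : B} {m n : ℕ} (hm : d^[m] x = 0) (hmn : m ≤ n) :
    d^[n] x = 0 := by
  rw [← Nat.sub_add_cancel hmn, Function.iterate_add_apply, hm, iterate_map_zero]

theorem exists_iterate_succ_eq_zero_and_ne (hd : d.IsLocallyNilpotent) {x : B} (hx : x ≠ 0) :
    ∃ p, d^[p + 1] x = 0 ∧ d^[p] x ≠ 0 := by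
  obtain ⟨n, hn⟩ := hd x
  induction n with
  | zero => exact absurd hn hx
  | succ n ih => exact (em (d^[n] x = 0)).elim ih fun h ↦ ⟨n, hn, h⟩

theorem iterate_add_map_mul {x y : B} {p q : ℕ} (hx : d^[p + 1] x = 0) (hy : d^[q + 1] y = 0) :
    d^[p + q] (x * y) = (p + q).choose p • (d^[p] x * d^[q] y) := by
  rw [iterate_map_mul, sum_eq_single_of_mem (p, q) (mem_antidiagonal.2 rfl)]
  rintro ⟨i, j⟩ hij hne
  rw [HasAntidiagonal.mem_antidiagonal] at hij
  obtain h | h : p < i ∨ q < j := by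
    by_contra! h
    exact hne (Prod.ext (by dsimp only at hij ⊢; omega) (by dsimp only at hij ⊢; omega))
  · rw [d.iterate_eq_zero_of_le hx h, zero_mul, smul_zero]
  · rw [d.iterate_eq_zero_of_le hy h, mul_zero, smul_zero]

theorem map_eq_zero_of_isUnit [IsDomain B] [CharZero B] (hd : d.IsLocallyNilpotent) {u : B}
    (hu : IsUnit u) : d u = 0 := by
  obtain ⟨v, huv⟩ := hu.exists_right_inv
  obtain ⟨p, hp, hpu⟩ := d.exists_iterate_succ_eq_zero_and_ne hd (left_ne_zero_of_mul_eq_one huv)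
  obtain ⟨q, hq, hqv⟩ := d.exists_iterate_succ_eq_zero_and_ne hd (right_ne_zero_of_mul_eq_one huv)
  obtain rfl | hp0 := Nat.eq_zero_or_pos p
  · simpa using hp
  have h1 : d^[p + q] (u * v) = 0 :=
    huv ▸ d.iterate_eq_zero_of_le (m := 1) (by simp) (by omega)
  rw [d.iterate_add_map_mul hp hq, nsmul_eq_mul] at h1
  exact absurd h1 <|
    mul_ne_zero (Nat.cast_ne_zero.2 (Nat.choose_pos (by omega)).ne') (mul_ne_zero hpu hqv)

end LocallyNilpotent

theorem map_algebraMap_rat {R B M : Type*} [CommSemiring R] [CommRing B] [Algebra R B]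
    [Algebra ℚ B] [AddCommGroup M] [Module B M] [Module R M] [Module ℚ M]
    (d : Derivation R B M) (q : ℚ) : d (algebraMap ℚ B q) = 0 := by
  rw [Algebra.algebraMap_eq_smul_one, map_rat_smul, map_one_eq_zero, smul_zero]

section Slice

variable {R B : Type*} [CommRing R] [CommRing B] [IsDomain B] [Algebra R B]

theorem transcendental_of_map_ne_zero [IsAddTorsionFree R] [FaithfulSMul R B]
    (d : Derivation R B B) {s : B} (hs : d s ≠ 0) : Transcendental R s := by
  rw [transcendental_iff_injective, injective_iff_map_eq_zero]
  have of_derivative_eq_zero (p : R[X]) (hp : derivative p = 0) (h : aeval s p = 0) : p = 0 := by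
    rw [eq_C_of_derivative_eq_zero hp] at h ⊢
    simpa using h
  suffices ∀ n (p : R[X]), p.natDegree ≤ n → aeval s p = 0 → p = 0 from
    fun p ↦ this _ p le_rfl
  intro n
  induction n with
  | zero => exact fun p hp ↦ of_derivative_eq_zero p (derivative_eq_zero.2 (by omega))
  | succ n ih =>
    intro p hp h
    have hp' : aeval s (derivative p) = 0 := by
      simpa [hs] using congrArg d h
    exact of_derivative_eq_zero p (ih _ ((natDegree_derivative_le p).trans (by omega)) hp') h

theorem surjective_aeval_of_isUnit [Algebra ℚ R] [CharZero B] (d : Derivation R B B)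
    (hd : d.IsLocallyNilpotent) (hker : ∀ b, d b = 0 → b ∈ Set.range (algebraMap R B)) {s : B}
    (hs : IsUnit (d s)) : Function.Surjective (aeval s : R[X] → B) := by
  obtain ⟨r, hr⟩ := hker _ (d.map_eq_zero_of_isUnit hd hs.unit⁻¹.isUnit)
  intro b
  obtain ⟨n, hn⟩ := hd b
  induction n generalizing b with
  | zero => exact ⟨0, by simpa using hn.symm⟩
  | succ n ih =>
    obtain ⟨q, hq⟩ := ih (d b) hn
    obtain ⟨P, hP⟩ := derivative_surjective (C r * q)
    have hdP : d (aeval s P) = d b := by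
      rw [map_aeval, hP, map_mul, aeval_C, hr, hq, smul_eq_mul, mul_comm, ← mul_assoc,
        hs.mul_val_inv, one_mul]
    obtain ⟨c, hc⟩ := hker (b - aeval s P) (by rw [map_sub, hdP, sub_self])
    exact ⟨P + C c, by rw [map_add, aeval_C, hc, add_sub_cancel]⟩

end Slice

end Derivation

def IsLND.toDerivation {B : Type*} [CommRing B] {D : B → B} (hD : IsLND D) (A : Subring B)
    (hA : ∀ a ∈ A, D a = 0) : Derivation A B B :=
  Derivation.mk'
    { toFun := D
      map_add' := hD.1
      map_smul' := fun a b ↦ by simp [Subring.smul_def, hD.2.1, hA a a.2] }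
    fun a b ↦ by simp [hD.2.1, mul_comm]

/-- Slice Theorem: if `B` is a domain containing `ℚ`, `D` a locally nilpotent derivation
with kernel `A`, and `s ∈ B` with `D s` a unit, then `B = A[s]` is a polynomial ring in
the single variable `s` over `A`, i.e. the evaluation map `A[X] → B`, `X ↦ s`, is bijective. -/
theorem stmt5 {B : Type*} [CommRing B] [IsDomain B] [Algebra ℚ B]
    (D : B → B) (hD : IsLND D)
    (A : Subring B) (hA : (A : Set B) = {b : B | D b = 0})
    (s : B) (hs : IsUnit (D s)) :
    Function.Bijective (fun p : Polynomial ↥A => Polynomial.eval₂ A.subtype s p) := by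
  have : CharZero B := charZero_of_injective_algebraMap (algebraMap ℚ B).injective
  have hmem (b : B) : b ∈ A ↔ D b = 0 := Set.ext_iff.mp hA b
  let d := hD.toDerivation A fun a ↦ (hmem a).1
  let _ : Algebra ℚ A :=
    ((algebraMap ℚ B).codRestrict A fun q ↦ (hmem _).2 (d.map_algebraMap_rat q)).toAlgebra
  exact ⟨transcendental_iff_injective.mp (d.transcendental_of_map_ne_zero hs.ne_zero),
    d.surjective_aeval_of_isUnit hD.2.2 (fun b hb ↦ ⟨⟨b, (hmem b).2 hb⟩, rfl⟩) hs⟩
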